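/- arXiv:0806.0197 — 4 statements merged into one kernel-verified Lean document; each statement's English description precedes it below -/
import Mathlib

section
/- (Weighted maximal inequality) For any $1 < r < \infty$ there is a constant $C_r$ such that for all measurable $f, \phi : \mathbb{T} \to \mathbb{C}$, $\int_\mathbb{T} (Mf)^r |\phi| \, dm \le C_r \int_\mathbb{T} |f|^r \, M\phi \, dm$. -/
/-!
Two properties of `M` suffice. By Vitali's covering lemma, every point of `{Mu > t}` lies in an
interval `I` on which `u` has average above `t`, and the selected disjoint intervals satisfy
`w(5I) ≤ |5I| · inf_I Mw`; summing gives the weighted weak-type bound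
`t · w{Mu > t} ≤ 5 ∫ u · Mw`. Moreover `Mu ≤ M(u · 1{u > t/2}) + t/2`, so
`w{Mu > t} ≤ (10/t) ∫_{u > t/2} u · Mw`. Integrating this against `r t^(r-1) dt` (layer cake)
and exchanging the integrals yields `∫ (Mu)^r w ≤ 5 · 2^r r/(r-1) ∫ u^r · Mw`: Marcinkiewicz
interpolation between the measures `w dm` and `Mw dm`.
-/

open MeasureTheory

/-- The Hardy–Littlewood maximal function on the circle `𝕋 = ℝ/ℤ`. -/
noncomputable def maxFn (f : AddCircle (1:ℝ) → ℂ) (x : AddCircle (1:ℝ)) : ENNReal :=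
  ⨆ (c : AddCircle (1:ℝ)) (ℓ : ℝ) (_ : 0 < ℓ) (_ : ℓ ≤ 1) (_ : dist x c ≤ ℓ / 2),
    (ENNReal.ofReal ℓ)⁻¹ * ∫⁻ y in {y : AddCircle (1:ℝ) | dist y c ≤ ℓ / 2}, (‖f y‖₊ : ENNReal)

open Set Filter Metric ENNReal Topology

theorem lintegral_Ioo_ofReal_mul_rpow_sub_one {p : ℝ} (hp : 0 < p) {A : ℝ} (hA : 0 ≤ A) :
    ∫⁻ s in Ioo 0 A, ENNReal.ofReal (p * s ^ (p - 1)) = ENNReal.ofReal (A ^ p) := by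
  have hint : IntegrableOn (fun s : ℝ => p * s ^ (p - 1)) (Ioc 0 A) := by
    rw [← uIoc_of_le hA]
    exact ((intervalIntegral.intervalIntegrable_rpow' (by linarith)).const_mul p).def'
  rw [← ofReal_integral_eq_lintegral_ofReal (hint.mono_set Ioo_subset_Ioc_self)
    (ae_restrict_of_forall_mem measurableSet_Ioo fun s hs => by have := hs.1; positivity),
    ← integral_Ioc_eq_integral_Ioo, ← intervalIntegral.integral_of_le hA,
    intervalIntegral.integral_const_mul, integral_rpow (Or.inl (by linarith)),
    sub_add_cancel, Real.zero_rpow hp.ne', sub_zero, mul_div_cancel₀ _ hp.ne']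

theorem rpow_eq_lintegral_indicator {p : ℝ} (hp : 0 < p) (a : ℝ≥0∞) :
    a ^ p = ∫⁻ s in Ioi (0 : ℝ),
      {s : ℝ | ENNReal.ofReal s < a}.indicator (fun s => ENNReal.ofReal (p * s ^ (p - 1))) s := by
  rw [lintegral_indicator (measurableSet_lt ENNReal.measurable_ofReal measurable_const),
    Measure.restrict_restrict (measurableSet_lt ENNReal.measurable_ofReal measurable_const)]
  rcases eq_or_ne a ⊤ with rfl | ha
  · have hIoi : {s : ℝ | ENNReal.ofReal s < ⊤} ∩ Ioi 0 = Ioi 0 := by simp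
    rw [hIoi, top_rpow_of_pos hp, eq_comm, ← top_le_iff]
    refine le_of_tendsto' (ENNReal.tendsto_ofReal_atTop.comp
      ((tendsto_rpow_atTop hp).comp tendsto_natCast_atTop_atTop)) fun n => ?_
    rw [Function.comp_apply, Function.comp_apply,
      ← lintegral_Ioo_ofReal_mul_rpow_sub_one hp n.cast_nonneg]
    exact lintegral_mono_set Ioo_subset_Ioi_self
  · have hIoo : {s : ℝ | ENNReal.ofReal s < a} ∩ Ioi 0 = Ioo 0 a.toReal := by
      ext s
      simp only [mem_inter_iff, mem_ofPred_eq, mem_Ioi, mem_Ioo]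
      constructor
      · rintro ⟨hsa, hs⟩
        exact ⟨hs, (ENNReal.ofReal_lt_iff_lt_toReal hs.le ha).mp hsa⟩
      · rintro ⟨hs, hsa⟩
        exact ⟨(ENNReal.ofReal_lt_iff_lt_toReal hs.le ha).mpr hsa, hs⟩
    rw [hIoo, lintegral_Ioo_ofReal_mul_rpow_sub_one hp toReal_nonneg,
      ← ofReal_rpow_of_nonneg toReal_nonneg hp.le, ofReal_toReal ha]

theorem mul_indicator_lt_mul_two_eq {α : Type*} (u : α → ℝ≥0∞) (φ : ℝ → ℝ≥0∞) (s : ℝ) (y : α) :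
    u y * {s : ℝ | ENNReal.ofReal s < u y * 2}.indicator φ s =
      φ s * {y | ENNReal.ofReal s / 2 < u y}.indicator u y := by
  simp only [indicator_apply, mem_ofPred_eq,
    ENNReal.div_lt_iff (Or.inl two_ne_zero) (Or.inl ofNat_ne_top)]
  split_ifs <;> ring

section Interpolation

variable {α : Type*} [MeasurableSpace α] {μ ν : Measure α} {T : (α → ℝ≥0∞) → α → ℝ≥0∞}
  {A : ℝ≥0∞}

theorem half_mul_measure_lt_le
    (hweak : ∀ u, Measurable u → ∀ t, t * ν {x | t < T u x} ≤ A * ∫⁻ y, u y ∂μ)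
    (hadd : ∀ u g t, (∀ y, u y ≤ g y + t) → ∀ x, T u x ≤ T g x + t)
    {u : α → ℝ≥0∞} (hu : Measurable u) (t : ℝ≥0∞) :
    t / 2 * ν {x | t < T u x} ≤ A * ∫⁻ y, {y | t / 2 < u y}.indicator u y ∂μ := by
  have hsplit : ∀ y, u y ≤ {y | t / 2 < u y}.indicator u y + t / 2 := fun y => by
    by_cases h : t / 2 < u y
    · rw [indicator_of_mem (show y ∈ {y | t / 2 < u y} from h)]
      exact le_self_add
    · rw [indicator_of_notMem (show y ∉ {y | t / 2 < u y} from h), zero_add]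
      exact not_lt.mp h
  have hsub : {x | t < T u x} ⊆ {x | t / 2 < T ({y | t / 2 < u y}.indicator u) x} := by
    intro x (hx : t < T u x)
    show t / 2 < _
    by_contra! hle
    have := (hx.trans_le (hadd _ _ _ hsplit x)).trans_le (add_le_add_left hle _)
    rw [ENNReal.add_halves] at this
    exact this.false
  exact (mul_le_mul_right (measure_mono hsub) _).trans
    (hweak _ (hu.indicator (measurableSet_lt measurable_const hu)) _)

theorem ofReal_mul_rpow_sub_one_eq {r s : ℝ} (hr : 1 < r) (hs : 0 < s) :
    ENNReal.ofReal (r * s ^ (r - 1)) =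
      ENNReal.ofReal (2 * r / (r - 1)) * ENNReal.ofReal ((r - 1) * s ^ (r - 1 - 1)) *
        (ENNReal.ofReal s / 2) := by
  have hr1 : 0 < r - 1 := by linarith
  rw [← ENNReal.ofReal_mul (by positivity), ← ENNReal.ofReal_ofNat 2,
    ← ENNReal.ofReal_div_of_pos two_pos, ← ENNReal.ofReal_mul (by positivity),
    Real.rpow_sub_one hs.ne' (r - 1)]
  congr 1
  field_simp

theorem ofReal_div_mul_lintegral_mul_two_rpow_sub_one {r : ℝ} (hr : 1 < r) (u : α → ℝ≥0∞) :
    ENNReal.ofReal (2 * r / (r - 1)) * ∫⁻ y, u y * (u y * 2) ^ (r - 1) ∂μ =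
      ENNReal.ofReal (2 ^ r * r / (r - 1)) * ∫⁻ y, u y ^ r ∂μ := by
  have hr1 : 0 < r - 1 := by linarith
  have hpt : ∀ a : ℝ≥0∞, a * (a * 2) ^ (r - 1) = 2 ^ (r - 1) * a ^ r := fun a => by
    have : a * a ^ (r - 1) = a ^ r := by
      calc a * a ^ (r - 1) = a ^ (1 : ℝ) * a ^ (r - 1) := by rw [rpow_one]
        _ = a ^ r := by rw [← rpow_add_of_nonneg _ _ zero_le_one hr1.le]; ring_nf
    rw [mul_rpow_of_nonneg _ _ hr1.le, ← this]
    ring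
  have hconst : ENNReal.ofReal (2 * r / (r - 1)) * 2 ^ (r - 1) =
      ENNReal.ofReal (2 ^ r * r / (r - 1)) := by
    rw [← ENNReal.ofReal_ofNat 2, ofReal_rpow_of_nonneg zero_le_two hr1.le,
      ← ENNReal.ofReal_mul (by positivity), Real.rpow_sub_one two_ne_zero]
    congr 1
    field_simp
  simp_rw [hpt]
  rw [lintegral_const_mul' _ _ (rpow_ne_top_of_nonneg hr1.le ofNat_ne_top), ← hconst, mul_assoc]

variable [SFinite μ]

theorem lintegral_Ioi_mul_lintegral_indicator_comm {u : α → ℝ≥0∞} (hu : Measurable u)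
    {φ : ℝ → ℝ≥0∞} (hφ : Measurable φ) (K : ℝ≥0∞) :
    ∫⁻ s in Ioi (0 : ℝ), K * φ s * ∫⁻ y, {y | ENNReal.ofReal s / 2 < u y}.indicator u y ∂μ =
      K * ∫⁻ y, u y * (∫⁻ s in Ioi (0 : ℝ),
        {s : ℝ | ENNReal.ofReal s < u y * 2}.indicator φ s) ∂μ := by
  have hF : Measurable fun p : ℝ × α =>
      u p.2 * {s : ℝ | ENNReal.ofReal s < u p.2 * 2}.indicator φ p.1 :=
    (hu.comp measurable_snd).mul ((hφ.comp measurable_fst).indicator (measurableSet_lt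
      (ENNReal.measurable_ofReal.comp measurable_fst) ((hu.comp measurable_snd).mul_const 2)))
  have hlevel : ∀ s, K * φ s * ∫⁻ y, {y | ENNReal.ofReal s / 2 < u y}.indicator u y ∂μ
      = K * ∫⁻ y, u y * {s : ℝ | ENNReal.ofReal s < u y * 2}.indicator φ s ∂μ := fun s => by
    rw [lintegral_congr (mul_indicator_lt_mul_two_eq u φ s),
      lintegral_const_mul _ (hu.indicator (measurableSet_lt measurable_const hu)), mul_assoc]
  rw [lintegral_congr hlevel, lintegral_const_mul _ hF.lintegral_prod_right',
    lintegral_lintegral_swap hF.aemeasurable]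
  refine congrArg _ (lintegral_congr fun y => ?_)
  dsimp only
  exact lintegral_const_mul _ (hφ.indicator
    (measurableSet_lt ENNReal.measurable_ofReal measurable_const))

variable [SFinite ν]

/-- Marcinkiewicz interpolation: `hweak` is a weak `(1, 1)` bound from `L¹(μ)` to `L¹,∞(ν)`, and
`hadd` says that `T` is monotone and bounded on `L∞` with norm `1`. -/
theorem lintegral_rpow_le_of_weakType_one
    (hmeas : ∀ u, Measurable u → Measurable (T u))
    (hweak : ∀ u, Measurable u → ∀ t, t * ν {x | t < T u x} ≤ A * ∫⁻ y, u y ∂μ)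
    (hadd : ∀ u g t, (∀ y, u y ≤ g y + t) → ∀ x, T u x ≤ T g x + t)
    {r : ℝ} (hr : 1 < r) {u : α → ℝ≥0∞} (hu : Measurable u) :
    ∫⁻ x, T u x ^ r ∂ν ≤ A * ENNReal.ofReal (2 ^ r * r / (r - 1)) * ∫⁻ y, u y ^ r ∂μ := by
  set φ : ℝ → ℝ≥0∞ := fun s => ENNReal.ofReal ((r - 1) * s ^ (r - 1 - 1))
  have hφ : Measurable φ := by fun_prop
  set c := ENNReal.ofReal (2 * r / (r - 1))
  calc ∫⁻ x, T u x ^ r ∂ν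
      = ∫⁻ x, (∫⁻ s in Ioi (0 : ℝ), {s : ℝ | ENNReal.ofReal s < T u x}.indicator
          (fun s => ENNReal.ofReal (r * s ^ (r - 1))) s) ∂ν := by
        simp_rw [← rpow_eq_lintegral_indicator (by linarith : (0 : ℝ) < r)]
    _ = ∫⁻ s in Ioi (0 : ℝ),
          ENNReal.ofReal (r * s ^ (r - 1)) * ν {x | ENNReal.ofReal s < T u x} := by
        rw [lintegral_lintegral_swap]
        · refine lintegral_congr fun s => ?_
          rw [← lintegral_indicator_const (measurableSet_lt measurable_const (hmeas u hu))]
          rfl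
        · exact (Measurable.indicator (by fun_prop) (measurableSet_lt
            (ENNReal.measurable_ofReal.comp measurable_snd) ((hmeas u hu).comp measurable_fst))
            ).aemeasurable
    _ ≤ ∫⁻ s in Ioi (0 : ℝ),
          c * φ s * (A * ∫⁻ y, {y | ENNReal.ofReal s / 2 < u y}.indicator u y ∂μ) := by
        refine setLIntegral_mono' measurableSet_Ioi fun s hs => ?_
        rw [ofReal_mul_rpow_sub_one_eq hr hs, mul_assoc]
        exact mul_le_mul_right (half_mul_measure_lt_le hweak hadd hu _) _
    _ = A * c * ∫⁻ y, u y * (∫⁻ s in Ioi (0 : ℝ),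
          {s : ℝ | ENNReal.ofReal s < u y * 2}.indicator φ s) ∂μ := by
        rw [← lintegral_Ioi_mul_lintegral_indicator_comm hu hφ]
        exact lintegral_congr fun s => by ring
    _ = A * (c * ∫⁻ y, u y * (u y * 2) ^ (r - 1) ∂μ) := by
        rw [mul_assoc]
        refine congrArg _ (congrArg _ (lintegral_congr fun y => ?_))
        rw [rpow_eq_lintegral_indicator (by linarith : (0 : ℝ) < r - 1) (u y * 2)]
    _ = A * ENNReal.ofReal (2 ^ r * r / (r - 1)) * ∫⁻ y, u y ^ r ∂μ := by
        rw [ofReal_div_mul_lintegral_mul_two_rpow_sub_one hr, mul_assoc]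

end Interpolation

local notation "𝕋" => AddCircle (1 : ℝ)

namespace UnitAddCircle

theorem dist_le_half (x y : 𝕋) : dist x y ≤ 1 / 2 := by
  simpa [dist_eq_norm] using AddCircle.norm_le_half_period (1 : ℝ) (x := x - y) one_ne_zero

theorem closedBall_eq_univ (c : 𝕋) {ρ : ℝ} (hρ : 1 / 2 ≤ ρ) : closedBall c ρ = univ :=
  AddCircle.closedBall_eq_univ_of_half_period_le 1 one_ne_zero c (by simpa using hρ)

theorem volume_closedBall_half_length (c : 𝕋) {ℓ : ℝ} (hℓ : ℓ ≤ 1) :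
    volume (closedBall c (ℓ / 2)) = ENNReal.ofReal ℓ := by
  rw [AddCircle.volume_closedBall, mul_div_cancel₀ _ two_ne_zero, min_eq_right hℓ]

-- An interval of length `ℓ ≤ 1` in `𝕋` is a closed ball of radius `ℓ / 2`.
noncomputable def maximalFunction (u : 𝕋 → ℝ≥0∞) (x : 𝕋) : ℝ≥0∞ :=
  ⨆ (c : 𝕋) (ℓ : ℝ) (_ : 0 < ℓ) (_ : ℓ ≤ 1) (_ : x ∈ closedBall c (ℓ / 2)),
    (ENNReal.ofReal ℓ)⁻¹ * ∫⁻ y in closedBall c (ℓ / 2), u y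

theorem maxFn_eq_maximalFunction (f : 𝕋 → ℂ) :
    maxFn f = maximalFunction fun y => (‖f y‖₊ : ℝ≥0∞) := rfl

theorem le_maximalFunction (u : 𝕋 → ℝ≥0∞) {x c : 𝕋} {ℓ : ℝ} (h0 : 0 < ℓ) (h1 : ℓ ≤ 1)
    (hx : x ∈ closedBall c (ℓ / 2)) :
    (ENNReal.ofReal ℓ)⁻¹ * ∫⁻ y in closedBall c (ℓ / 2), u y ≤ maximalFunction u x :=
  le_iSup_of_le c <| le_iSup_of_le ℓ <| le_iSup_of_le h0 <| le_iSup_of_le h1 <|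
    le_iSup_of_le hx le_rfl

theorem maximalFunction_le {u : 𝕋 → ℝ≥0∞} {x : 𝕋} {a : ℝ≥0∞}
    (h : ∀ c ℓ, 0 < ℓ → ℓ ≤ 1 → x ∈ closedBall c (ℓ / 2) →
      (ENNReal.ofReal ℓ)⁻¹ * ∫⁻ y in closedBall c (ℓ / 2), u y ≤ a) :
    maximalFunction u x ≤ a :=
  iSup_le fun c => iSup_le fun ℓ => iSup_le fun h0 => iSup_le fun h1 => iSup_le fun hx =>
    h c ℓ h0 h1 hx

theorem maximalFunction_le_add {u g : 𝕋 → ℝ≥0∞} {t : ℝ≥0∞}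
    (h : ∀ y, u y ≤ g y + t) (x : 𝕋) : maximalFunction u x ≤ maximalFunction g x + t := by
  refine maximalFunction_le fun c ℓ h0 h1 hx => ?_
  have hℓ : ENNReal.ofReal ℓ ≠ 0 := by simpa using h0
  calc (ENNReal.ofReal ℓ)⁻¹ * ∫⁻ y in closedBall c (ℓ / 2), u y
      ≤ (ENNReal.ofReal ℓ)⁻¹ * ∫⁻ y in closedBall c (ℓ / 2), (g y + t) := by
        gcongr with y
        exact h y
    _ = (ENNReal.ofReal ℓ)⁻¹ * (∫⁻ y in closedBall c (ℓ / 2), g y) + t := by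
        rw [lintegral_add_right _ measurable_const, setLIntegral_const,
          volume_closedBall_half_length c h1, mul_add, mul_comm t, ← mul_assoc,
          ENNReal.inv_mul_cancel hℓ ofReal_ne_top, one_mul]
    _ ≤ maximalFunction g x + t := add_le_add_left (le_maximalFunction g h0 h1 hx) t

theorem lowerSemicontinuous_maximalFunction (u : 𝕋 → ℝ≥0∞) :
    LowerSemicontinuous (maximalFunction u) := by
  intro x a ha
  simp only [maximalFunction, lt_iSup_iff] at ha
  obtain ⟨c, ℓ, h0, h1, hx, hlt⟩ := ha
  rcases h1.eq_or_lt with rfl | h1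
  · exact Eventually.of_forall fun x' =>
      hlt.trans_le (le_maximalFunction u h0 le_rfl (dist_le_half x' c))
  -- the same interval, slightly enlarged, still has average above `a`
  have hcont : Tendsto (fun ℓ' => (ENNReal.ofReal ℓ')⁻¹ * ∫⁻ y in closedBall c (ℓ / 2), u y)
      (𝓝[>] ℓ) (𝓝 ((ENNReal.ofReal ℓ)⁻¹ * ∫⁻ y in closedBall c (ℓ / 2), u y)) :=
    ENNReal.Tendsto.mul_const (tendsto_inv_iff.mpr
      ((ENNReal.continuous_ofReal.tendsto ℓ).mono_left nhdsWithin_le_nhds))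
      (Or.inl (ENNReal.inv_ne_zero.mpr ofReal_ne_top))
  obtain ⟨ℓ', ⟨hℓℓ', hℓ'1⟩, ha'⟩ :=
    (Eventually.and (Ioc_mem_nhdsGT h1) (hcont.eventually (lt_mem_nhds hlt))).exists
  filter_upwards [closedBall_mem_nhds x (by linarith : 0 < (ℓ' - ℓ) / 2)] with x' hx'
  calc a < (ENNReal.ofReal ℓ')⁻¹ * ∫⁻ y in closedBall c (ℓ / 2), u y := ha'
    _ ≤ (ENNReal.ofReal ℓ')⁻¹ * ∫⁻ y in closedBall c (ℓ' / 2), u y := by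
        gcongr
    _ ≤ maximalFunction u x' := by
        refine le_maximalFunction u (h0.trans hℓℓ') hℓ'1 ?_
        calc dist x' c ≤ dist x' x + dist x c := dist_triangle _ _ _
          _ ≤ (ℓ' - ℓ) / 2 + ℓ / 2 := add_le_add hx' hx
          _ = ℓ' / 2 := by ring

theorem measurable_maximalFunction (u : 𝕋 → ℝ≥0∞) : Measurable (maximalFunction u) :=
  (lowerSemicontinuous_maximalFunction u).measurable

theorem setLIntegral_closedBall_le_maximalFunction (w : 𝕋 → ℝ≥0∞) {c y : 𝕋} {ρ : ℝ}
    (hρ : 0 < ρ) (hy : y ∈ closedBall c ρ) :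
    ∫⁻ x in closedBall c ρ, w x ≤ ENNReal.ofReal (2 * ρ) * maximalFunction w y := by
  rcases le_or_gt (2 * ρ) 1 with h1 | h1
  · rw [← ENNReal.inv_mul_le_iff (by simpa using hρ) ofReal_ne_top]
    have hρ' : 2 * ρ / 2 = ρ := by ring
    simpa only [hρ'] using le_maximalFunction w (by positivity) h1 (by rwa [hρ'])
  · have hall := le_maximalFunction w one_pos le_rfl (dist_le_half y c)
    rw [ENNReal.ofReal_one, inv_one, one_mul, closedBall_eq_univ c le_rfl] at hall
    rw [closedBall_eq_univ c (by linarith)]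
    calc ∫⁻ x in univ, w x ≤ maximalFunction w y := hall
      _ ≤ ENNReal.ofReal (2 * ρ) * maximalFunction w y := by
        refine le_mul_of_one_le_left' ?_
        rw [← ENNReal.ofReal_one]
        exact ENNReal.ofReal_le_ofReal h1.le

theorem mul_setLIntegral_closedBall_five_le {u : 𝕋 → ℝ≥0∞} (hu : Measurable u) (w : 𝕋 → ℝ≥0∞)
    {c : 𝕋} {ρ : ℝ} (hρ : 0 < ρ) {t : ℝ≥0∞}
    (ht : t * ENNReal.ofReal (2 * ρ) ≤ ∫⁻ y in closedBall c ρ, u y) :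
    t * ∫⁻ x in closedBall c (5 * ρ), w x ≤
      5 * ∫⁻ y in closedBall c ρ, u y * maximalFunction w y := by
  have h5 : ENNReal.ofReal (2 * (5 * ρ)) = ENNReal.ofReal (2 * ρ) * 5 := by
    rw [show 2 * (5 * ρ) = 2 * ρ * 5 by ring, ENNReal.ofReal_mul (by positivity),
      ENNReal.ofReal_ofNat]
  rw [← ENNReal.mul_le_mul_iff_right (a := ENNReal.ofReal (2 * ρ)) (by simpa using hρ)
    ofReal_ne_top]
  calc ENNReal.ofReal (2 * ρ) * (t * ∫⁻ x in closedBall c (5 * ρ), w x)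
      = t * ENNReal.ofReal (2 * ρ) * ∫⁻ x in closedBall c (5 * ρ), w x := by ring
    _ ≤ (∫⁻ y in closedBall c ρ, u y) * ∫⁻ x in closedBall c (5 * ρ), w x := by gcongr
    _ = ∫⁻ y in closedBall c ρ, u y * ∫⁻ x in closedBall c (5 * ρ), w x :=
        (lintegral_mul_const'' _ hu.aemeasurable).symm
    _ ≤ ∫⁻ y in closedBall c ρ, u y * (ENNReal.ofReal (2 * (5 * ρ)) * maximalFunction w y) := by
        refine setLIntegral_mono' measurableSet_closedBall fun y hy => ?_
        gcongr
        refine setLIntegral_closedBall_le_maximalFunction w (by positivity) ?_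
        exact closedBall_subset_closedBall (by linarith) hy
    _ = ENNReal.ofReal (2 * ρ) * (5 * ∫⁻ y in closedBall c ρ, u y * maximalFunction w y) := by
        rw [h5, ← mul_assoc, ← lintegral_const_mul' _ _ (mul_ne_top ofReal_ne_top ofNat_ne_top)]
        exact lintegral_congr fun y => by ring

theorem exists_closedBall_of_lt_maximalFunction {u : 𝕋 → ℝ≥0∞} {t : ℝ≥0∞} {z : 𝕋}
    (hz : t < maximalFunction u z) : ∃ c ρ, (0 < ρ ∧ ρ ≤ 1 / 2) ∧ z ∈ closedBall c ρ ∧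
      t * ENNReal.ofReal (2 * ρ) ≤ ∫⁻ y in closedBall c ρ, u y := by
  simp only [maximalFunction, lt_iSup_iff] at hz
  obtain ⟨c, ℓ, h0, h1, hzc, hlt⟩ := hz
  refine ⟨c, ℓ / 2, ⟨by positivity, by linarith⟩, hzc, ?_⟩
  rw [mul_div_cancel₀ _ two_ne_zero, ← ENNReal.le_div_iff_mul_le (Or.inl (by simpa using h0))
    (Or.inl ofReal_ne_top), ENNReal.div_eq_inv_mul]
  exact hlt.le

theorem mul_withDensity_lt_maximalFunction_le {u : 𝕋 → ℝ≥0∞} (hu : Measurable u)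
    (w : 𝕋 → ℝ≥0∞) (t : ℝ≥0∞) :
    t * volume.withDensity w {x | t < maximalFunction u x} ≤
      5 * ∫⁻ y, u y ∂volume.withDensity (maximalFunction w) := by
  set E := {x | t < maximalFunction u x}
  rw [withDensity_apply _ (measurableSet_lt measurable_const (measurable_maximalFunction u)),
    lintegral_withDensity_eq_lintegral_mul _ (measurable_maximalFunction w) hu]
  simp only [Pi.mul_apply, mul_comm (maximalFunction w _)]
  choose! c ρ hρ hzc hint using fun z (hz : z ∈ E) => exists_closedBall_of_lt_maximalFunction hz
  obtain ⟨𝔲, h𝔲E, h𝔲disj, h𝔲cov⟩ := Vitali.exists_disjoint_subfamily_covering_enlargement_closedBall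
    E c ρ (1 / 2) (fun z hz => (hρ z hz).2) 5 (by norm_num)
  have h𝔲 : 𝔲.Countable := h𝔲disj.countable_of_nonempty_interior fun i hi =>
    (nonempty_ball.2 (hρ i (h𝔲E hi)).1).mono (interior_maximal ball_subset_closedBall isOpen_ball)
  have : Countable 𝔲 := h𝔲.to_subtype
  have hcover : E ⊆ ⋃ i : 𝔲, closedBall (c i) (5 * ρ i) := fun z hz => by
    obtain ⟨b, hb, hsub⟩ := h𝔲cov z hz
    exact mem_iUnion.mpr ⟨⟨b, hb⟩, hsub (hzc z hz)⟩
  calc t * ∫⁻ x in E, w x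
      ≤ t * ∫⁻ x in ⋃ i : 𝔲, closedBall (c i) (5 * ρ i), w x := by
        gcongr
    _ ≤ t * ∑' i : 𝔲, ∫⁻ x in closedBall (c i) (5 * ρ i), w x := by
        gcongr
        exact lintegral_iUnion_le _ _
    _ = ∑' i : 𝔲, t * ∫⁻ x in closedBall (c i) (5 * ρ i), w x := ENNReal.tsum_mul_left.symm
    _ ≤ ∑' i : 𝔲, 5 * ∫⁻ y in closedBall (c i) (ρ i), u y * maximalFunction w y :=
        ENNReal.tsum_le_tsum fun i =>
          mul_setLIntegral_closedBall_five_le hu w (hρ i (h𝔲E i.2)).1 (hint i (h𝔲E i.2))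
    _ = 5 * ∫⁻ y in ⋃ i ∈ 𝔲, closedBall (c i) (ρ i), u y * maximalFunction w y := by
        rw [ENNReal.tsum_mul_left,
          lintegral_biUnion h𝔲 (fun _ _ => measurableSet_closedBall) h𝔲disj]
    _ ≤ 5 * ∫⁻ y, u y * maximalFunction w y := by
        gcongr
        exact Measure.restrict_le_self

end UnitAddCircle

open UnitAddCircle

/-- Fefferman–Stein weighted maximal inequality:
`∫ (Mf)^r |φ| ≤ C_r ∫ |f|^r Mφ` for `1 < r < ∞`. -/
theorem stmt9 (r : ℝ) (hr : 1 < r) :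
    ∃ C : ℝ, 0 < C ∧ ∀ f φ : AddCircle (1:ℝ) → ℂ, Measurable f → Measurable φ →
      ∫⁻ x : AddCircle (1:ℝ), (maxFn f x) ^ r * (‖φ x‖₊ : ENNReal) ≤
        ENNReal.ofReal C * ∫⁻ x : AddCircle (1:ℝ), (‖f x‖₊ : ENNReal) ^ r * maxFn φ x := by
  have hr1 : 0 < r - 1 := sub_pos.2 hr
  refine ⟨5 * (2 ^ r * r / (r - 1)), by positivity, fun f φ hf hφ => ?_⟩
  have hu : Measurable fun y => (‖f y‖₊ : ℝ≥0∞) := hf.nnnorm.coe_nnreal_ennreal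
  have hw : Measurable fun y => (‖φ y‖₊ : ℝ≥0∞) := hφ.nnnorm.coe_nnreal_ennreal
  have key := lintegral_rpow_le_of_weakType_one (T := maximalFunction) (A := 5)
    (ν := volume.withDensity fun y => (‖φ y‖₊ : ℝ≥0∞))
    (μ := volume.withDensity (maximalFunction fun y => (‖φ y‖₊ : ℝ≥0∞)))
    (fun u _ => measurable_maximalFunction u)
    (fun _ hu t => mul_withDensity_lt_maximalFunction_le hu _ t)
    (fun _ _ _ h => maximalFunction_le_add h) hr hu
  rw [lintegral_withDensity_eq_lintegral_mul _ hw ((measurable_maximalFunction _).pow_const r),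
    lintegral_withDensity_eq_lintegral_mul _ (measurable_maximalFunction _) (hu.pow_const r)]
    at key
  rw [ENNReal.ofReal_mul (by norm_num), ENNReal.ofReal_ofNat, maxFn_eq_maximalFunction,
    maxFn_eq_maximalFunction]
  simpa only [Pi.mul_apply, mul_comm] using key
end

section
/- (Dualization of weak-$L^p$, sufficiency direction) Fix $0 < p < \infty$ and $f : \mathbb{T} \to \mathbb{C}$ integrable on every finite-measure set. Suppose there is $A > 0$ such that for every measurable set $E \subseteq \mathbb{T}$ with $|E| > 0$ there exists a measurable subset $E' \subseteq E$ with $|E'| > |E|/2$ and $|\int_{E'} f \, dm| \le A |E|^{1-1/p}$. Then $\|f\|_{p,\infty} \le 2^{3/2 + 2/p} A$. -/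
/-!
Put `c = λ / √2` and `E = {|f| > λ}`. Every point of `E` has `Re (ω f) > c` for one of the four
units `ω = ±1, ±i`, so one of the corresponding pieces `F ⊆ E` carries a quarter of the measure
of `E`. Applying the hypothesis to `F` gives `F' ⊆ F` with `|F'| > |F|/2`, and then
`c |F| / 2 ≤ c |F'| ≤ |∫_{F'} Re (ω f)| ≤ |∫_{F'} f| ≤ A |F|^{1-1/p}`, i.e. `c |F|^{1/p} ≤ 2A`.
Since `|E| ≤ 4 |F|`, this yields `λ |E|^{1/p} ≤ √2 · 4^{1/p} · 2A = 2^{3/2+2/p} A`.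
-/

open MeasureTheory Complex

lemma Complex.exists_norm_le_sqrt_two_mul_re_mul (z : ℂ) :
    ∃ ω ∈ ({1, -1, I, -I} : Finset ℂ), ‖z‖ ≤ √2 * (ω * z).re := by
  have hz := norm_le_sqrt_two_mul_max z
  rcases le_total |z.re| |z.im| with h | h
  · rw [max_eq_right h] at hz
    rcases abs_cases z.im with ⟨him, -⟩ | ⟨him, -⟩
    · exact ⟨-I, by simp, by simpa [him] using hz⟩
    · exact ⟨I, by simp, by simpa [him] using hz⟩
  · rw [max_eq_left h] at hz
    rcases abs_cases z.re with ⟨hre, -⟩ | ⟨hre, -⟩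
    · exact ⟨1, by simp, by simpa [hre] using hz⟩
    · exact ⟨-1, by simp, by simpa [hre] using hz⟩

lemma Real.mul_rpow_one_div_le_of_mul_le_mul_rpow_sub {t c B p : ℝ} (ht : 0 < t)
    (h : c * t ≤ B * t ^ (1 - 1 / p)) : c * t ^ (1 / p) ≤ B := by
  refine le_of_mul_le_mul_left ?_ (Real.rpow_pos_of_pos ht (1 - 1 / p))
  calc t ^ (1 - 1 / p) * (c * t ^ (1 / p)) = c * t := by
        rw [mul_left_comm, ← Real.rpow_add ht, sub_add_cancel, Real.rpow_one]
    _ ≤ B * t ^ (1 - 1 / p) := h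
    _ = t ^ (1 - 1 / p) * B := mul_comm _ _

namespace MeasureTheory

variable {α : Type*} [MeasurableSpace α] {μ : Measure α}

def HasLargeSubsetIntegralBound (μ : Measure α) (f : α → ℂ) (p A : ℝ) : Prop :=
  ∀ E : Set α, MeasurableSet E → 0 < μ E →
    ∃ E' ⊆ E, MeasurableSet E' ∧ μ E / 2 < μ E' ∧
      ‖∫ x in E', f x ∂μ‖ ≤ A * μ.real E ^ (1 - 1 / p)

lemma HasLargeSubsetIntegralBound.congr_ae {f g : α → ℂ} {p A : ℝ}
    (h : HasLargeSubsetIntegralBound μ f p A) (hfg : f =ᵐ[μ] g) :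
    HasLargeSubsetIntegralBound μ g p A := by
  intro E hE hE_pos
  obtain ⟨E', hE'E, hE', hE'_large, hE'_int⟩ := h E hE hE_pos
  refine ⟨E', hE'E, hE', hE'_large, ?_⟩
  rwa [← setIntegral_congr_ae hE' (hfg.mono fun x hx _ => hx)]

lemma exists_mem_measureReal_le_card_mul {ι : Type*} {S : Finset ι} (hS : S.Nonempty)
    {E : Set α} {F : ι → Set α} (hEF : E ⊆ ⋃ i ∈ S, F i) (hF : ∀ i ∈ S, μ (F i) ≠ ⊤) :
    ∃ i ∈ S, μ.real E ≤ S.card * μ.real (F i) := by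
  refine Finset.exists_le_of_sum_le hS ?_
  have hE : μ.real E ≤ ∑ i ∈ S, μ.real (F i) :=
    (measureReal_mono hEF (measure_biUnion_lt_top S.finite_toSet
      fun i hi => (hF i hi).lt_top).ne).trans (measureReal_biUnion_finset_le S F)
  rw [Finset.sum_const, nsmul_eq_mul, ← Finset.mul_sum]
  gcongr

lemma mul_measureReal_le_norm_setIntegral {f : α → ℂ} {s : Set α} {ω : ℂ} {c : ℝ}
    (hs : MeasurableSet s) (hμs : μ s ≠ ⊤) (hf : IntegrableOn f s μ) (hω : ‖ω‖ ≤ 1)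
    (hc : ∀ x ∈ s, c ≤ (ω * f x).re) :
    c * μ.real s ≤ ‖∫ x in s, f x ∂μ‖ :=
  calc c * μ.real s ≤ ∫ x in s, (ω * f x).re ∂μ := by
        rw [mul_comm]
        exact setIntegral_ge_of_const_le hs hμs hc (hf.const_mul ω).re
    _ = (ω * ∫ x in s, f x ∂μ).re := by
        rw [← integral_const_mul]
        exact integral_re (hf.const_mul ω)
    _ ≤ ‖ω * ∫ x in s, f x ∂μ‖ := re_le_norm _
    _ ≤ ‖∫ x in s, f x ∂μ‖ := by
        rw [norm_mul]
        exact mul_le_of_le_one_left (norm_nonneg _) hω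

lemma HasLargeSubsetIntegralBound.mul_measureReal_rpow_le {f : α → ℂ} {p A : ℝ}
    (h : HasLargeSubsetIntegralBound μ f p A) (hf : Integrable f μ) {F : Set α}
    (hF : MeasurableSet F) (hμF : μ F ≠ ⊤) (hF_pos : 0 < μ.real F) {ω : ℂ} (hω : ‖ω‖ ≤ 1)
    {c : ℝ} (hc_nonneg : 0 ≤ c) (hc : ∀ x ∈ F, c ≤ (ω * f x).re) :
    c * μ.real F ^ (1 / p) ≤ 2 * A := by
  obtain ⟨F', hF'F, hF', hF'_large, hF'_int⟩ := h F hF (ENNReal.toReal_pos_iff.mp hF_pos).1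
  have hμF' : μ F' ≠ ⊤ := ne_top_of_le_ne_top hμF (measure_mono hF'F)
  have hF'_large_real : μ.real F / 2 < μ.real F' := by
    simpa [Measure.real, ENNReal.toReal_div] using
      (ENNReal.toReal_lt_toReal (ENNReal.div_ne_top hμF two_ne_zero) hμF').mpr hF'_large
  have hF'_lower := mul_measureReal_le_norm_setIntegral hF' hμF' hf.integrableOn hω
    fun x hx => hc x (hF'F hx)
  have := Real.mul_rpow_one_div_le_of_mul_le_mul_rpow_sub (c := c / 2) hF_pos <|
    calc c / 2 * μ.real F = c * (μ.real F / 2) := by ring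
      _ ≤ c * μ.real F' := by gcongr
      _ ≤ A * μ.real F ^ (1 - 1 / p) := hF'_lower.trans hF'_int
  linarith

theorem HasLargeSubsetIntegralBound.mul_measureReal_norm_gt_rpow_le_of_measurable
    [IsFiniteMeasure μ] {f : α → ℂ} {p A : ℝ} (hp : 0 < p) (hA : 0 ≤ A)
    (h : HasLargeSubsetIntegralBound μ f p A) (hf : Integrable f μ) (hfm : Measurable f)
    {lam : ℝ} (hlam : 0 < lam) :
    lam * μ.real {x | lam < ‖f x‖} ^ (1 / p) ≤ 2 ^ ((3:ℝ) / 2 + 2 / p) * A := by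
  set E := {x | lam < ‖f x‖}
  rcases measureReal_nonneg.eq_or_lt with hE | hE_pos
  · rw [← hE, Real.zero_rpow (one_div_pos.mpr hp).ne', mul_zero]
    positivity
  set S : Finset ℂ := {1, -1, I, -I}
  let F : ℂ → Set α := fun ω => {x | lam < ‖f x‖ ∧ ‖f x‖ ≤ √2 * (ω * f x).re}
  have hEF : E ⊆ ⋃ ω ∈ S, F ω := fun x hx => by
    obtain ⟨ω, hωS, hxω⟩ := exists_norm_le_sqrt_two_mul_re_mul (f x)
    exact Set.mem_biUnion hωS ⟨hx, hxω⟩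
  obtain ⟨ω, hωS, hEFω⟩ :=
    exists_mem_measureReal_le_card_mul ⟨1, by simp [S]⟩ hEF fun _ _ => measure_ne_top μ _
  have hEF4 : μ.real E ≤ 4 * μ.real (F ω) :=
    hEFω.trans (by gcongr; exact_mod_cast Finset.card_le_four)
  have hω : ‖ω‖ ≤ 1 := by
    simp only [S, Finset.mem_insert, Finset.mem_singleton] at hωS
    rcases hωS with rfl | rfl | rfl | rfl <;> simp
  have hF : MeasurableSet (F ω) :=
    (measurableSet_lt measurable_const hfm.norm).inter
      (measurableSet_le (f := fun x => ‖f x‖) (g := fun x => √2 * (ω * f x).re)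
        (by fun_prop) (by fun_prop))
  have hc : ∀ x ∈ F ω, lam / √2 ≤ (ω * f x).re := fun x ⟨hx, hxω⟩ => by
    rw [div_le_iff₀' (by positivity)]
    linarith
  have hFω := h.mul_measureReal_rpow_le hf hF (measure_ne_top μ _) (by linarith) hω
    (by positivity) hc
  calc lam * μ.real E ^ (1 / p) ≤ lam * (4 * μ.real (F ω)) ^ (1 / p) := by gcongr
    _ = 2 ^ ((1:ℝ) / 2 + 2 / p) * (lam / √2 * μ.real (F ω) ^ (1 / p)) := by
        rw [Real.mul_rpow (by norm_num) measureReal_nonneg, Real.rpow_add two_pos,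
          Real.sqrt_eq_rpow, show (4:ℝ) = 2 ^ (2:ℝ) by norm_num, ← Real.rpow_mul two_pos.le]
        field_simp
    _ ≤ 2 ^ ((1:ℝ) / 2 + 2 / p) * (2 * A) := by gcongr
    _ = 2 ^ ((3:ℝ) / 2 + 2 / p) * A := by
        rw [show (3:ℝ) / 2 + 2 / p = (1 / 2 + 2 / p) + 1 by ring, Real.rpow_add_one two_pos.ne']
        ring

theorem HasLargeSubsetIntegralBound.mul_measureReal_norm_gt_rpow_le
    [IsFiniteMeasure μ] {f : α → ℂ} {p A : ℝ} (hp : 0 < p) (hA : 0 ≤ A)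
    (h : HasLargeSubsetIntegralBound μ f p A) (hf : Integrable f μ) {lam : ℝ} (hlam : 0 < lam) :
    lam * μ.real {x | lam < ‖f x‖} ^ (1 / p) ≤ 2 ^ ((3:ℝ) / 2 + 2 / p) * A := by
  have hfg := hf.1.ae_eq_mk
  have hE : {x | lam < ‖f x‖} =ᵐ[μ] {x | lam < ‖hf.1.mk f x‖} :=
    hfg.mono fun x hx => show (lam < ‖f x‖) = (lam < ‖_‖) by rw [hx]
  rw [measureReal_congr hE]
  exact (h.congr_ae hfg).mul_measureReal_norm_gt_rpow_le_of_measurable hp hA (hf.congr hfg)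
    hf.1.stronglyMeasurable_mk.measurable hlam

end MeasureTheory

/-- Dualization of weak-`L^p` (sufficiency direction): if for every positive-measure
set `E ⊆ 𝕋` there is `E' ⊆ E` with `|E'| > |E|/2` and `|∫_{E'} f| ≤ A |E|^{1-1/p}`,
then `‖f‖_{p,∞} ≤ 2^{3/2+2/p} A`. -/
theorem stmt12 (p : ℝ) (hp : 0 < p) (f : AddCircle (1:ℝ) → ℂ) (hf : Integrable f)
    (A : ℝ) (hA : 0 < A)
    (h : ∀ E : Set (AddCircle (1:ℝ)), MeasurableSet E → 0 < volume E →
      ∃ E' : Set (AddCircle (1:ℝ)), E' ⊆ E ∧ MeasurableSet E' ∧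
        volume E / 2 < volume E' ∧
        ‖∫ x in E', f x‖ ≤ A * (volume E).toReal ^ (1 - 1/p)) :
    ∀ lam : ℝ, 0 < lam →
      lam * (volume {x : AddCircle (1:ℝ) | lam < ‖f x‖}).toReal ^ (1/p) ≤
        2 ^ ((3:ℝ)/2 + 2/p) * A := by
  intro lam hlam
  exact HasLargeSubsetIntegralBound.mul_measureReal_norm_gt_rpow_le hp hA.le h hf hlam
end

section
/- Let $(X,\rho)$ be a measure space and $\Psi : [0,\infty) \to [0,\infty)$ continuous and increasing with $\Psi(0) = 0$. Then for any measurable $f : X \to \mathbb{C}$, $\int_X \Psi(|f|) \, d\rho = \int_0^\infty \Psi(f^*(t)) \, dt$, where $f^*$ is the decreasing rearrangement of $f$. -/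
/-!
Both sides are computed by the layer-cake formula `∫⁻ φ dμ = ∫₀^∞ μ {φ > u} du`. As `Ψ` is
monotone and lower semicontinuous with `Ψ 0 = 0`, each superlevel set `{Ψ > u}` is a ray
`(s, ∞]`, so it suffices that `|f|` and `f*` are equimeasurable:
`ρ {|f| > s} = |{t > 0 | f*(t) > s}|`. This holds because `f*(t) > s ↔ t < ρ {|f| > s}`, the
distribution function `s ↦ ρ {|f| > s}` being right-continuous.
-/

open MeasureTheory

/-- The decreasing rearrangement `f*(t) = inf {λ : ρ(|f| > λ) ≤ t}` (with `inf ∅ = ∞`). -/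
noncomputable def decRearr {X : Type*} [MeasurableSpace X] (ρ : Measure X)
    (f : X → ℂ) (t : ENNReal) : ENNReal :=
  sInf {l : ENNReal | ρ {x | l < (‖f x‖₊ : ENNReal)} ≤ t}

open Set Filter ENNReal

lemma lintegral_eq_lintegral_meas_lt_ennreal {α : Type*} [MeasurableSpace α] (μ : Measure α)
    {f : α → ℝ≥0∞} (hf : AEMeasurable f μ) :
    ∫⁻ x, f x ∂μ = ∫⁻ u in Ioi (0 : ℝ), μ {x | ENNReal.ofReal u < f x} := by
  by_cases htop : μ {x | f x = ∞} = 0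
  · have hfin : ∀ᵐ x ∂μ, f x ≠ ∞ := by simpa [ae_iff] using htop
    calc ∫⁻ x, f x ∂μ = ∫⁻ x, ENNReal.ofReal (f x).toReal ∂μ :=
          lintegral_congr_ae (hfin.mono fun x hx => (ofReal_toReal hx).symm)
      _ = ∫⁻ u in Ioi (0 : ℝ), μ {x | u < (f x).toReal} :=
          lintegral_eq_lintegral_meas_lt μ (ae_of_all _ fun _ => toReal_nonneg) hf.ennreal_toReal
      _ = _ := setLIntegral_congr_fun measurableSet_Ioi fun u hu =>
          measure_congr <| hfin.mono fun x hx =>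
            propext (ofReal_lt_iff_lt_toReal (le_of_lt hu) hx).symm
  · rw [lintegral_eq_top_of_measure_eq_top_ne_zero hf htop, eq_comm, eq_top_iff]
    calc ∞ = ∫⁻ _ in Ioi (0 : ℝ), μ {x | f x = ∞} := by
          rw [setLIntegral_const, Real.volume_Ioi, mul_top htop]
      _ ≤ _ := lintegral_mono fun u => measure_mono fun x (hx : f x = ∞) => by simp [hx]

lemma setOf_lt_eq_Ioi_sSup {α β : Type*} [CompleteLinearOrder α] [TopologicalSpace α]
    [OrderTopology α] [LinearOrder β] {Ψ : α → β} (hmono : Monotone Ψ)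
    (hlsc : LowerSemicontinuous Ψ) {l : β} (hl : Ψ ⊥ ≤ l) :
    {a | l < Ψ a} = Ioi (sSup {a | Ψ a ≤ l}) := by
  have hsup : Ψ (sSup {a | Ψ a ≤ l}) ≤ l := (hlsc.isClosed_preimage l).sSup_mem ⟨⊥, hl⟩
  ext a
  simp only [mem_ofPred_eq, mem_Ioi, ← not_le]
  exact not_congr ⟨fun ha => le_sSup ha, fun ha => (hmono ha).trans hsup⟩

lemma lintegral_comp_eq_of_measure_lt_eq {α β : Type*} [MeasurableSpace α] [MeasurableSpace β]
    {μ : Measure α} {ν : Measure β} {g : α → ℝ≥0∞} {h : β → ℝ≥0∞} {Ψ : ℝ≥0∞ → ℝ≥0∞}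
    (hΨm : Monotone Ψ) (hΨlsc : LowerSemicontinuous Ψ) (hΨ0 : Ψ 0 = 0)
    (hg : AEMeasurable g μ) (hh : AEMeasurable h ν)
    (hgh : ∀ s, μ {x | s < g x} = ν {y | s < h y}) :
    ∫⁻ x, Ψ (g x) ∂μ = ∫⁻ y, Ψ (h y) ∂ν := by
  rw [lintegral_eq_lintegral_meas_lt_ennreal μ (f := fun x => Ψ (g x))
      (hΨm.measurable.comp_aemeasurable hg),
    lintegral_eq_lintegral_meas_lt_ennreal ν (f := fun y => Ψ (h y))
      (hΨm.measurable.comp_aemeasurable hh)]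
  refine lintegral_congr fun u => ?_
  change μ (g ⁻¹' {a | _ < Ψ a}) = ν (h ⁻¹' {a | _ < Ψ a})
  rw [setOf_lt_eq_Ioi_sSup hΨm hΨlsc (by simp [hΨ0])]
  exact hgh _

/-- The infimum defining `decRearr` is attained: `s ↦ ρ {s < g}` is right-continuous. -/
lemma measure_sInf_lt_le {X : Type*} [MeasurableSpace X] (ρ : Measure X) (g : X → ℝ≥0∞)
    (t : ℝ≥0∞) : ρ {x | sInf {l | ρ {x | l < g x} ≤ t} < g x} ≤ t := by
  set S := {l | ρ {x | l < g x} ≤ t}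
  rcases S.eq_empty_or_nonempty with hS | hS
  · simp [hS]
  obtain ⟨u, hu_anti, -, hu_lim, huS⟩ := (isGLB_sInf S).exists_seq_antitone_tendsto hS
  have hunion : {x | sInf S < g x} = ⋃ n, {x | u n < g x} := by
    ext x
    simp only [mem_ofPred_eq, mem_iUnion]
    exact ⟨fun hx => (hu_lim.eventually (gt_mem_nhds hx)).exists,
      fun ⟨n, hn⟩ => (sInf_le (huS n)).trans_lt hn⟩
  have hmono : Monotone fun n => {x | u n < g x} := fun m n hmn x hx => (hu_anti hmn).trans_lt hx
  rw [hunion, hmono.measure_iUnion]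
  exact iSup_le huS

section Rearrangement

variable {X : Type*} [MeasurableSpace X] (ρ : Measure X) (f : X → ℂ)

lemma decRearr_le_iff (s t : ℝ≥0∞) :
    decRearr ρ f t ≤ s ↔ ρ {x | s < (‖f x‖₊ : ℝ≥0∞)} ≤ t :=
  ⟨fun h => (measure_mono fun _ hx => h.trans_lt hx).trans (measure_sInf_lt_le ρ _ t),
    fun h => sInf_le h⟩

lemma lt_decRearr_iff (s t : ℝ≥0∞) :
    s < decRearr ρ f t ↔ t < ρ {x | s < (‖f x‖₊ : ℝ≥0∞)} := by
  simpa only [not_le] using (decRearr_le_iff ρ f s t).not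

lemma antitone_decRearr : Antitone (decRearr ρ f) :=
  fun _ _ hab => sInf_le_sInf fun _ hl => hl.trans hab

lemma volume_restrict_Ioi_setOf_ofReal_lt (c : ℝ≥0∞) :
    volume.restrict (Ioi 0) {t : ℝ | ENNReal.ofReal t < c} = c := by
  rw [Measure.restrict_apply' measurableSet_Ioi]
  rcases eq_or_ne c ∞ with rfl | hc
  · simp
  · have : {t : ℝ | ENNReal.ofReal t < c} ∩ Ioi 0 = Ioo 0 c.toReal := by
      ext t
      simp only [mem_inter_iff, mem_ofPred_eq, mem_Ioi, mem_Ioo]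
      exact ⟨fun ⟨h1, h2⟩ => ⟨h2, (ofReal_lt_iff_lt_toReal h2.le hc).mp h1⟩,
        fun ⟨h1, h2⟩ => ⟨(ofReal_lt_iff_lt_toReal h1.le hc).mpr h2, h1⟩⟩
    rw [this, Real.volume_Ioo, sub_zero, ofReal_toReal hc]

lemma volume_restrict_Ioi_lt_decRearr (s : ℝ≥0∞) :
    volume.restrict (Ioi 0) {t : ℝ | s < decRearr ρ f (ENNReal.ofReal t)}
      = ρ {x | s < (‖f x‖₊ : ℝ≥0∞)} := by
  simp only [lt_decRearr_iff]
  exact volume_restrict_Ioi_setOf_ofReal_lt _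

end Rearrangement

/-- For `Ψ` continuous, increasing, with `Ψ(0) = 0`:
`∫_X Ψ(|f|) dρ = ∫_0^∞ Ψ(f*(t)) dt`. -/
theorem stmt15 {X : Type*} [MeasurableSpace X] (ρ : Measure X) (f : X → ℂ)
    (hf : Measurable f)
    (Ψ : ENNReal → ENNReal) (hΨc : Continuous Ψ) (hΨm : Monotone Ψ) (hΨ0 : Ψ 0 = 0) :
    ∫⁻ x, Ψ (‖f x‖₊ : ENNReal) ∂ρ =
      ∫⁻ t in Set.Ioi (0:ℝ), Ψ (decRearr ρ f (ENNReal.ofReal t)) :=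
  lintegral_comp_eq_of_measure_lt_eq hΨm hΨc.lowerSemicontinuous hΨ0
    hf.nnnorm.coe_nnreal_ennreal.aemeasurable
    ((antitone_decRearr ρ f).measurable.comp ENNReal.measurable_ofReal).aemeasurable
    fun s => (volume_restrict_Ioi_lt_decRearr ρ f s).symm
end

section
/- (Hardy's inequality on $(0,1)$) Let $1 < p < \infty$ and $\psi$ be a nonnegative measurable function on $(0,1)$. Then $\left( \int_0^1 \left( \frac{1}{t} \int_0^t \psi(s)\,ds \right)^p dt \right)^{1/p} \le p' \left( \int_0^1 \psi(s)^p \, ds \right)^{1/p}$, where $p' = p/(p-1)$. -/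
/-!
With `q = p / (p - 1)`, Hölder's inequality applied to `ψ = (ψ s ^ (1 / (p q))) s ^ (-1 / (p q))`
gives, for every `t > 0`,
`(t⁻¹ ∫₀ᵗ ψ) ^ p ≤ q ^ (p - 1) t ^ (-(1 + 1 / q)) ∫₀ᵗ ψ(s) ^ p s ^ (1 / q) ds`.
Integrating in `t` and exchanging the order of integration, the weight integrates to at most
`∫ₛ^∞ t ^ (-(1 + 1 / q)) dt = q s ^ (-1 / q)`, which cancels `s ^ (1 / q)` and leaves
`q ^ p ∫ ψ ^ p`.
-/

open MeasureTheory Set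
open scoped ENNReal

lemma lintegral_Ioo_zero_ofReal_rpow {r t : ℝ} (hr : -1 < r) (ht : 0 < t) :
    ∫⁻ s in Ioo 0 t, ENNReal.ofReal (s ^ r) = ENNReal.ofReal (t ^ (r + 1) / (r + 1)) := by
  rw [← ofReal_integral_eq_lintegral_ofReal
      ((intervalIntegral.integrableOn_Ioo_rpow_iff ht).mpr hr)
      (ae_restrict_of_forall_mem measurableSet_Ioo fun s hs ↦ (Real.rpow_pos_of_pos hs.1 r).le),
    ← integral_Ioc_eq_integral_Ioo, ← intervalIntegral.integral_of_le ht.le,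
    integral_rpow (Or.inl hr), Real.zero_rpow (by linarith), sub_zero]

lemma lintegral_Ioi_ofReal_rpow {r s : ℝ} (hr : r < -1) (hs : 0 < s) :
    ∫⁻ t in Ioi s, ENNReal.ofReal (t ^ r) = ENNReal.ofReal (-s ^ (r + 1) / (r + 1)) := by
  rw [← ofReal_integral_eq_lintegral_ofReal (integrableOn_Ioi_rpow_of_lt hr hs)
      (ae_restrict_of_forall_mem measurableSet_Ioi fun t ht ↦
        (Real.rpow_pos_of_pos (hs.trans ht) r).le),
    integral_Ioi_rpow_of_lt hr hs]

theorem lintegral_Ioo_lintegral_Ioo_swap {μ ν : Measure ℝ} [SFinite μ] [SFinite ν]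
    {f : ℝ → ℝ → ℝ≥0∞} (hf : Measurable (Function.uncurry f)) (a b : ℝ) :
    ∫⁻ t in Ioo a b, ∫⁻ s in Ioo a t, f t s ∂μ ∂ν =
      ∫⁻ s in Ioo a b, ∫⁻ t in Ioo s b, f t s ∂ν ∂μ := by
  set g : ℝ → ℝ → ℝ≥0∞ := fun t s ↦ if s < t then f t s else 0
  have hg : Measurable (Function.uncurry g) :=
    Measurable.ite (measurableSet_lt measurable_snd measurable_fst) hf measurable_const
  have inner_t : ∀ t ∈ Ioo a b, ∫⁻ s in Ioo a t, f t s ∂μ = ∫⁻ s in Ioo a b, g t s ∂μ := by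
    intro t ht
    have : Ioo a t = Iio t ∩ Ioo a b := by
      ext s; simp only [mem_Ioo, mem_Iio, mem_inter_iff]; constructor <;> intro h
      · exact ⟨h.2, h.1, h.2.trans ht.2⟩
      · exact ⟨h.2.1, h.1⟩
    rw [this, ← Measure.restrict_restrict measurableSet_Iio,
      ← lintegral_indicator measurableSet_Iio]
    rfl
  have inner_s : ∀ s ∈ Ioo a b, ∫⁻ t in Ioo s b, f t s ∂ν = ∫⁻ t in Ioo a b, g t s ∂ν := by
    intro s hs
    have : Ioo s b = Ioi s ∩ Ioo a b := by
      ext t; simp only [mem_Ioo, mem_Ioi, mem_inter_iff]; constructor <;> intro h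
      · exact ⟨h.1, hs.1.trans h.1, h.2⟩
      · exact ⟨h.1, h.2.2⟩
    rw [this, ← Measure.restrict_restrict measurableSet_Ioi,
      ← lintegral_indicator measurableSet_Ioi]
    rfl
  rw [setLIntegral_congr_fun measurableSet_Ioo inner_t,
    setLIntegral_congr_fun measurableSet_Ioo inner_s]
  exact lintegral_lintegral_swap hg.aemeasurable

lemma lintegral_Ioo_zero_rpow_le {p q : ℝ} (hpq : p.HolderConjugate q) {F : ℝ → ℝ≥0∞}
    (hF : Measurable F) {t : ℝ} (ht : 0 < t) :
    (∫⁻ s in Ioo 0 t, F s) ^ p ≤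
      ENNReal.ofReal (q * t ^ q⁻¹) ^ (p - 1) *
        ∫⁻ s in Ioo 0 t, F s ^ p * ENNReal.ofReal (s ^ q⁻¹) := by
  have hp := hpq.pos
  have hq := hpq.symm.pos
  have hrp : (p * q)⁻¹ * p = q⁻¹ := by field_simp
  have hrq : -(p * q)⁻¹ * q = -p⁻¹ := by field_simp
  set r := (p * q)⁻¹
  set u : ℝ → ℝ≥0∞ := fun s ↦ F s * ENNReal.ofReal (s ^ r)
  set v : ℝ → ℝ≥0∞ := fun s ↦ ENNReal.ofReal (s ^ (-r))
  have hFuv : ∫⁻ s in Ioo 0 t, F s = ∫⁻ s in Ioo 0 t, (u * v) s := by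
    refine setLIntegral_congr_fun measurableSet_Ioo fun s hs ↦ ?_
    have hsr := Real.rpow_pos_of_pos hs.1 r
    rw [Pi.mul_apply, mul_assoc, ← ENNReal.ofReal_mul hsr.le, Real.rpow_neg hs.1.le,
      mul_inv_cancel₀ hsr.ne', ENNReal.ofReal_one, mul_one]
  have hu : ∫⁻ s in Ioo 0 t, u s ^ p = ∫⁻ s in Ioo 0 t, F s ^ p * ENNReal.ofReal (s ^ q⁻¹) := by
    refine setLIntegral_congr_fun measurableSet_Ioo fun s hs ↦ ?_
    rw [ENNReal.mul_rpow_of_nonneg _ _ hp.le,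
      ENNReal.ofReal_rpow_of_pos (Real.rpow_pos_of_pos hs.1 r), ← Real.rpow_mul hs.1.le, hrp]
  have hv : ∫⁻ s in Ioo 0 t, v s ^ q = ENNReal.ofReal (q * t ^ q⁻¹) := by
    rw [setLIntegral_congr_fun measurableSet_Ioo (g := fun s ↦ ENNReal.ofReal (s ^ (-p⁻¹)))
      fun s hs ↦ by
        rw [ENNReal.ofReal_rpow_of_pos (Real.rpow_pos_of_pos hs.1 _), ← Real.rpow_mul hs.1.le,
          hrq],
      lintegral_Ioo_zero_ofReal_rpow (by linarith [hpq.inv_add_inv_eq_one, inv_pos.2 hq]) ht,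
      show -p⁻¹ + 1 = q⁻¹ by linarith [hpq.inv_add_inv_eq_one], div_inv_eq_mul, mul_comm]
  have holder := ENNReal.lintegral_mul_le_Lp_mul_Lq (volume.restrict (Ioo 0 t)) hpq
    (f := u) (g := v)
    (hF.mul (by fun_prop : Measurable fun s : ℝ ↦ ENNReal.ofReal (s ^ r))).aemeasurable
    (by fun_prop : Measurable v).aemeasurable
  rw [← hFuv, hu, hv] at holder
  calc (∫⁻ s in Ioo 0 t, F s) ^ p
      ≤ ((∫⁻ s in Ioo 0 t, F s ^ p * ENNReal.ofReal (s ^ q⁻¹)) ^ (1 / p) *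
          ENNReal.ofReal (q * t ^ q⁻¹) ^ (1 / q)) ^ p := ENNReal.rpow_le_rpow holder hp.le
    _ = _ := by
      rw [ENNReal.mul_rpow_of_nonneg _ _ hp.le, ← ENNReal.rpow_mul, ← ENNReal.rpow_mul,
        one_div_mul_cancel hp.ne', ENNReal.rpow_one, one_div_mul_eq_div, hpq.div_conj_eq_sub_one,
        mul_comm]

lemma ofReal_one_div_mul_lintegral_Ioo_zero_rpow_le {p q : ℝ} (hpq : p.HolderConjugate q)
    {F : ℝ → ℝ≥0∞} (hF : Measurable F) {t : ℝ} (ht : 0 < t) :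
    (ENNReal.ofReal (1 / t) * ∫⁻ s in Ioo 0 t, F s) ^ p ≤
      ENNReal.ofReal (q ^ (p - 1)) * (ENNReal.ofReal (t ^ (-(1 + q⁻¹))) *
        ∫⁻ s in Ioo 0 t, F s ^ p * ENNReal.ofReal (s ^ q⁻¹)) := by
  have hp := hpq.pos
  have hq := hpq.symm.pos
  have hexp : -p + q⁻¹ * (p - 1) = -(1 + q⁻¹) := by
    rw [← hpq.one_sub_inv]; field_simp; ring
  have hweight : (1 / t) ^ p * (q * t ^ q⁻¹) ^ (p - 1) = q ^ (p - 1) * t ^ (-(1 + q⁻¹)) := by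
    rw [Real.mul_rpow hq.le (by positivity), ← Real.rpow_mul ht.le, one_div, Real.inv_rpow ht.le,
      ← Real.rpow_neg ht.le, ← hexp, Real.rpow_add ht]
    ring
  calc (ENNReal.ofReal (1 / t) * ∫⁻ s in Ioo 0 t, F s) ^ p
      = ENNReal.ofReal (1 / t) ^ p * (∫⁻ s in Ioo 0 t, F s) ^ p :=
        ENNReal.mul_rpow_of_nonneg _ _ hp.le
    _ ≤ ENNReal.ofReal (1 / t) ^ p * (ENNReal.ofReal (q * t ^ q⁻¹) ^ (p - 1) *
          ∫⁻ s in Ioo 0 t, F s ^ p * ENNReal.ofReal (s ^ q⁻¹)) := by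
        gcongr; exact lintegral_Ioo_zero_rpow_le hpq hF ht
    _ = _ := by
      rw [← mul_assoc, ENNReal.ofReal_rpow_of_pos (by positivity),
        ENNReal.ofReal_rpow_of_pos (by positivity), ← ENNReal.ofReal_mul (by positivity),
        hweight, ENNReal.ofReal_mul (by positivity), mul_assoc]

theorem lintegral_Ioo_zero_average_rpow_le {p q : ℝ} (hpq : p.HolderConjugate q)
    {F : ℝ → ℝ≥0∞} (hF : Measurable F) (b : ℝ) :
    ∫⁻ t in Ioo 0 b, (ENNReal.ofReal (1 / t) * ∫⁻ s in Ioo 0 t, F s) ^ p ≤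
      ENNReal.ofReal q ^ p * ∫⁻ s in Ioo 0 b, F s ^ p := by
  have hq := hpq.symm.pos
  set G : ℝ → ℝ≥0∞ := fun s ↦ F s ^ p * ENNReal.ofReal (s ^ q⁻¹)
  set w : ℝ → ℝ≥0∞ := fun t ↦ ENNReal.ofReal (t ^ (-(1 + q⁻¹)))
  have hG : Measurable G := by fun_prop
  have hw : Measurable w := by fun_prop
  have tail : ∀ s ∈ Ioo 0 b, (∫⁻ t in Ioi s, w t) * G s = ENNReal.ofReal q * F s ^ p := by
    intro s hs
    have hreal : -s ^ (-(1 + q⁻¹) + 1) / (-(1 + q⁻¹) + 1) * s ^ q⁻¹ = q := by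
      rw [show -(1 + q⁻¹) + 1 = -q⁻¹ by ring, Real.rpow_neg hs.1.le, neg_div_neg_eq,
        div_mul_eq_mul_div, inv_mul_cancel₀ (Real.rpow_pos_of_pos hs.1 _).ne',
        one_div, inv_inv]
    rw [lintegral_Ioi_ofReal_rpow (by linarith [inv_pos.2 hq]) hs.1, mul_left_comm,
      ← ENNReal.ofReal_mul' (Real.rpow_pos_of_pos hs.1 _).le, hreal, mul_comm]
  calc ∫⁻ t in Ioo 0 b, (ENNReal.ofReal (1 / t) * ∫⁻ s in Ioo 0 t, F s) ^ p
      ≤ ∫⁻ t in Ioo 0 b, ENNReal.ofReal (q ^ (p - 1)) * (w t * ∫⁻ s in Ioo 0 t, G s) :=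
        setLIntegral_mono' measurableSet_Ioo fun t ht ↦
          ofReal_one_div_mul_lintegral_Ioo_zero_rpow_le hpq hF ht.1
    _ = ENNReal.ofReal (q ^ (p - 1)) * ∫⁻ t in Ioo 0 b, ∫⁻ s in Ioo 0 t, w t * G s := by
        rw [lintegral_const_mul' _ _ ENNReal.ofReal_ne_top]
        simp_rw [lintegral_const_mul _ hG]
    _ = ENNReal.ofReal (q ^ (p - 1)) * ∫⁻ s in Ioo 0 b, ∫⁻ t in Ioo s b, w t * G s := by
        rw [lintegral_Ioo_lintegral_Ioo_swap (f := fun t s ↦ w t * G s) (by fun_prop)]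
    _ ≤ ENNReal.ofReal (q ^ (p - 1)) * ∫⁻ s in Ioo 0 b, (∫⁻ t in Ioi s, w t) * G s := by
        gcongr with s
        rw [lintegral_mul_const _ hw]
        gcongr
        exact Ioo_subset_Ioi_self
    _ = ENNReal.ofReal (q ^ (p - 1)) * ∫⁻ s in Ioo 0 b, ENNReal.ofReal q * F s ^ p := by
        rw [setLIntegral_congr_fun measurableSet_Ioo tail]
    _ = ENNReal.ofReal q ^ p * ∫⁻ s in Ioo 0 b, F s ^ p := by
        rw [lintegral_const_mul' _ _ ENNReal.ofReal_ne_top, ← mul_assoc,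
          ← ENNReal.ofReal_mul (by positivity), ← Real.rpow_add_one hq.ne', sub_add_cancel,
          ENNReal.ofReal_rpow_of_pos hq]

theorem stmt18_general (p : ℝ) (hp : 1 < p) (ψ : ℝ → ℝ) (hmeas : Measurable ψ) :
    (∫⁻ t in Set.Ioo (0:ℝ) 1,
        (ENNReal.ofReal (1/t) * ∫⁻ s in Set.Ioo (0:ℝ) t, ENNReal.ofReal (ψ s)) ^ p) ^ (1/p) ≤
      ENNReal.ofReal (p / (p - 1)) *
        (∫⁻ s in Set.Ioo (0:ℝ) 1, ENNReal.ofReal (ψ s) ^ p) ^ (1/p) := by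
  have hpq : p.HolderConjugate (p / (p - 1)) := (Real.holderConjugate_iff_eq_conjExponent hp).2 rfl
  have hp0 : 0 < p := hpq.pos
  calc _ ≤ (ENNReal.ofReal (p / (p - 1)) ^ p *
          ∫⁻ s in Set.Ioo (0:ℝ) 1, ENNReal.ofReal (ψ s) ^ p) ^ (1/p) :=
        ENNReal.rpow_le_rpow (lintegral_Ioo_zero_average_rpow_le hpq hmeas.ennreal_ofReal 1)
          (by positivity)
    _ = _ := by
        rw [ENNReal.mul_rpow_of_nonneg _ _ (by positivity), ← ENNReal.rpow_mul,
          mul_one_div_cancel hp0.ne', ENNReal.rpow_one]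

/-- Hardy's inequality on `(0,1)`: for `1 < p < ∞` and nonnegative measurable `ψ`,
`(∫_0^1 (t⁻¹ ∫_0^t ψ)^p dt)^{1/p} ≤ p' (∫_0^1 ψ^p)^{1/p}` with `p' = p/(p-1)`. -/
theorem stmt18 (p : ℝ) (hp : 1 < p) (ψ : ℝ → ℝ) (hmeas : Measurable ψ)
    (hpos : ∀ s, 0 ≤ ψ s) :
    (∫⁻ t in Set.Ioo (0:ℝ) 1,
        (ENNReal.ofReal (1/t) * ∫⁻ s in Set.Ioo (0:ℝ) t, ENNReal.ofReal (ψ s)) ^ p) ^ (1/p) ≤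
      ENNReal.ofReal (p / (p - 1)) *
        (∫⁻ s in Set.Ioo (0:ℝ) 1, ENNReal.ofReal (ψ s) ^ p) ^ (1/p) :=
  stmt18_general p hp ψ hmeas
end
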